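/- arXiv:1710.01103 — 4 statements merged into one kernel-verified Lean document; each statement's English description precedes it below -/
import Mathlib

section
/- Let h : ℝ → ℝ be defined by h(ω) = cos((π/2)·log₂(2ω/π)) for π/4 < ω ≤ π and h(ω) = 0 otherwise (the Simoncelli isotropic wavelet radial profile). Then h satisfies the dyadic Riesz partition of unity: for every ω > 0, ∑_{i ∈ ℤ} h(2^i ω)² = 1. -/
/-!
Write `ω = 2⁻ᵗ π` with `t = log₂ (π / ω)`, so that `2ⁱ ω = 2^(i - t) π`. In the logarithmic
variable `s = log₂ (ω / π)` the profile is `cos (π/2 · (s + 1))` on the window `(-2, 0]` of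
length two, so exactly the two indices `i = ⌊t⌋ - 1, ⌊t⌋` contribute. Their arguments differ
by `π/2`, and the two squared terms are `cos² x + sin² x = 1`.
-/

open Real

theorem tsum_intCast_sub_eq_of_eq_zero_off_Ioc (F : ℝ → ℝ)
    (hF : ∀ s, s ∉ Set.Ioc (-2) 0 → F s = 0) (t : ℝ) :
    ∑' i : ℤ, F (i - t) = F (⌊t⌋ - t - 1) + F (⌊t⌋ - t) := by
  have hsupp : ∀ i ∉ ({⌊t⌋ - 1, ⌊t⌋} : Finset ℤ), F (i - t) = 0 := by
    intro i hi
    refine hF _ fun ⟨hlo, hhi⟩ => hi ?_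
    have hle : i ≤ ⌊t⌋ := Int.le_floor.mpr (by linarith)
    have hgt : ⌊t⌋ - 2 < i := by
      have := Int.floor_le t
      exact_mod_cast (by push_cast; linarith : ((⌊t⌋ - 2 : ℤ) : ℝ) < i)
    simp only [Finset.mem_insert, Finset.mem_singleton]
    omega
  rw [tsum_eq_sum hsupp, Finset.sum_pair (by omega)]
  push_cast
  ring_nf

theorem cos_sq_add_cos_sq_add_pi_div_two (x : ℝ) : cos x ^ 2 + cos (x + π / 2) ^ 2 = 1 := by
  rw [cos_add_pi_div_two, neg_sq, cos_sq_add_sin_sq]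

theorem two_rpow_mul_pi_mem_Ioc_iff (s : ℝ) :
    (π / 4 < 2 ^ s * π ∧ 2 ^ s * π ≤ π) ↔ s ∈ Set.Ioc (-2) 0 := by
  have hquarter : π / 4 = 2 ^ (-2 : ℝ) * π := by norm_num [rpow_neg]; ring
  conv_lhs => rw [hquarter]; arg 2; rhs; rw [← one_mul π, ← rpow_zero 2]
  simp only [mul_lt_mul_iff_left₀ pi_pos, mul_le_mul_iff_left₀ pi_pos,
    rpow_lt_rpow_left_iff one_lt_two, rpow_le_rpow_left_iff one_lt_two, Set.mem_Ioc]

theorem logb_two_mul_two_rpow_mul_pi_div_pi (s : ℝ) :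
    logb 2 (2 * (2 ^ s * π) / π) = s + 1 := by
  have hpow : 2 * (2 ^ s * π) / π = (2 : ℝ) ^ (s + 1) := by
    rw [rpow_add_one two_ne_zero]
    field_simp
  rw [hpow, logb_rpow two_pos (by norm_num)]

theorem two_zpow_mul_eq_two_rpow_sub_logb_mul_pi {ω : ℝ} (hω : 0 < ω) (i : ℤ) :
    (2 : ℝ) ^ i * ω = 2 ^ ((i : ℝ) - logb 2 (π / ω)) * π := by
  rw [rpow_sub two_pos, rpow_intCast, rpow_logb two_pos (by norm_num) (by positivity)]
  field_simp

/-- The Simoncelli isotropic wavelet radial profile satisfies the dyadic Riesz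
partition of unity. -/
theorem simoncelli_riesz_partition_of_unity
    (h : ℝ → ℝ)
    (hdef : ∀ ω : ℝ,
      h ω = if π / 4 < ω ∧ ω ≤ π then Real.cos (π / 2 * Real.logb 2 (2 * ω / π)) else 0) :
    ∀ ω : ℝ, 0 < ω → ∑' i : ℤ, (h ((2 : ℝ) ^ i * ω)) ^ 2 = 1 := by
  intro ω hω
  have hprofile : ∀ s : ℝ,
      h (2 ^ s * π) = if s ∈ Set.Ioc (-2) 0 then cos (π / 2 * (s + 1)) else 0 := fun s => by
    simp only [hdef, logb_two_mul_two_rpow_mul_pi_div_pi, two_rpow_mul_pi_mem_Ioc_iff]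
  set t := logb 2 (π / ω)
  simp_rw [two_zpow_mul_eq_two_rpow_sub_logb_mul_pi hω]
  rw [tsum_intCast_sub_eq_of_eq_zero_off_Ioc (fun s => h (2 ^ s * π) ^ 2)
    (fun s hs => by simp [hprofile, hs]) t]
  have hprev : (⌊t⌋ : ℝ) - t - 1 ∈ Set.Ioc (-2) 0 :=
    ⟨by linarith [Int.sub_one_lt_floor t], by linarith [Int.floor_le t]⟩
  have hlast : (⌊t⌋ : ℝ) - t ∈ Set.Ioc (-2) 0 :=
    ⟨by linarith [Int.sub_one_lt_floor t], by linarith [Int.floor_le t]⟩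
  rw [hprofile, hprofile, if_pos hprev, if_pos hlast, sub_add_cancel, mul_add, mul_one]
  exact cos_sq_add_cos_sq_add_pi_div_two _
end

section
/- Fix κ with 0 < κ < π/2. Let h : ℝ → ℝ be the Vow (variance-optimal wavelet) radial profile: h(ω) = √(1/2 + tan(κ(1 + 2·log₂(2ω/π)))/(2·tan κ)) for π/4 ≤ ω < π/2, h(ω) = √(1/2 − tan(κ(1 + 2·log₂(ω/π)))/(2·tan κ)) for π/2 ≤ ω ≤ π, and h(ω) = 0 otherwise. Then h satisfies the dyadic Riesz partition of unity: for every ω > 0, ∑_{i ∈ ℤ} h(2^i ω)² = 1. -/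
open Real

/-!
Every `ω > 0` has exactly one dyadic dilate `x = 2ⁿω` in `[π/4, π/2)`. Since `h` is supported in
`[π/4, π)`, only the terms `h x` and `h (2x)` survive, and the two branches of `h` are built so that
at `x` and `2x` they share the same tangent `t = tan (κ (1 + 2 log₂ (2x/π)))`:
`h x ^ 2 + h (2x) ^ 2 = (1/2 + t/(2 tan κ)) + (1/2 - t/(2 tan κ)) = 1`.
-/

section DyadicPartition

variable {M : Type*} [AddCommMonoid M] [TopologicalSpace M] {f : ℝ → M} {a b : ℝ} {c : M}

lemma exists_zpow_mul_mem_Ico (ha : 0 < a) (hb : 1 < b) {ω : ℝ} (hω : 0 < ω) :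
    ∃ n : ℤ, b ^ n * ω ∈ Set.Ico a (b * a) := by
  obtain ⟨m, hm₁, hm₂⟩ := exists_mem_Ico_zpow (div_pos hω ha) hb
  have hbm : 0 < b ^ m := zpow_pos (by linarith) m
  refine ⟨-m, ?_, ?_⟩
  · rw [zpow_neg, inv_mul_eq_div, le_div_iff₀ hbm]
    rwa [le_div_iff₀ ha, mul_comm] at hm₁
  · rw [zpow_neg, inv_mul_eq_div, div_lt_iff₀ hbm]
    rwa [div_lt_iff₀ ha, zpow_add_one₀ (by linarith), mul_assoc, mul_comm] at hm₂

lemma tsum_zpow_mul_eq_of_support_subset (ha : 0 < a) (hb : 1 < b)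
    (hsupp : Function.support f ⊆ Set.Ico a (b ^ 2 * a))
    (hpair : ∀ x ∈ Set.Ico a (b * a), f x + f (b * x) = c) {ω : ℝ} (hω : 0 < ω) :
    ∑' i : ℤ, f (b ^ i * ω) = c := by
  obtain ⟨n, hn₁, hn₂⟩ := exists_zpow_mul_mem_Ico ha hb hω
  have hb₀ : b ≠ 0 := by positivity
  have hvanish : ∀ i ∉ ({n, n + 1} : Finset ℤ), f (b ^ i * ω) = 0 := by
    intro i hi
    simp only [Finset.mem_insert, Finset.mem_singleton, not_or] at hi
    refine Function.notMem_support.mp fun hi' ↦ ?_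
    obtain ⟨hi₁, hi₂⟩ := hsupp hi'
    rcases (by omega : i + 1 ≤ n ∨ n + 2 ≤ i) with hlow | hhigh
    · have : b ^ (i + 1) * ω ≤ b ^ n * ω := by gcongr; exact hb.le
      rw [zpow_add_one₀ hb₀] at this
      nlinarith
    · have : b ^ (n + 2) * ω ≤ b ^ i * ω := by gcongr; exact hb.le
      rw [zpow_add₀ hb₀, zpow_two] at this
      nlinarith
  rw [tsum_eq_sum hvanish, Finset.sum_pair (by omega), zpow_add_one₀ hb₀, mul_comm _ b, mul_assoc]
  exact hpair _ ⟨hn₁, hn₂⟩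

end DyadicPartition

lemma Real.abs_tan_le_tan {θ κ : ℝ} (hθ : |θ| ≤ κ) (hκ : κ < π / 2) : |tan θ| ≤ tan κ := by
  obtain ⟨hθ₁, hθ₂⟩ := abs_le.mp hθ
  have hmono := strictMonoOn_tan.monotoneOn
  rw [abs_le, ← tan_neg]
  exact ⟨hmono ⟨by linarith, by linarith⟩ ⟨by linarith, by linarith⟩ hθ₁,
    hmono ⟨by linarith, by linarith⟩ ⟨by linarith, hκ⟩ hθ₂⟩

lemma sqrt_half_add_sq_add_sqrt_half_sub_sq {t T : ℝ} (ht : |t| ≤ T) :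
    √(1 / 2 + t / (2 * T)) ^ 2 + √(1 / 2 - t / (2 * T)) ^ 2 = 1 := by
  have hT : 0 ≤ T := (abs_nonneg t).trans ht
  have hq : |t / (2 * T)| ≤ 1 / 2 := by
    rw [abs_div, abs_of_nonneg (by positivity : 0 ≤ 2 * T)]
    exact div_le_of_le_mul₀ (by positivity) (by norm_num) (by linarith)
  obtain ⟨hq₁, hq₂⟩ := abs_le.mp hq
  rw [sq_sqrt (by linarith), sq_sqrt (by linarith)]
  ring

lemma abs_one_add_two_mul_logb_le {y : ℝ} (hy₁ : 1 / 2 ≤ y) (hy₂ : y ≤ 1) :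
    |1 + 2 * logb 2 y| ≤ 1 := by
  have hy₀ : 0 < y := by linarith
  have hl₁ : -1 ≤ logb 2 y := by
    rwa [le_logb_iff_rpow_le one_lt_two hy₀, rpow_neg_one, ← one_div]
  have hl₂ : logb 2 y ≤ 0 := logb_nonpos one_lt_two hy₀.le hy₂
  rw [abs_le]
  constructor <;> linarith

noncomputable def vowProfile (κ ω : ℝ) : ℝ :=
  if π / 4 ≤ ω ∧ ω < π / 2 then
    √(1 / 2 + tan (κ * (1 + 2 * logb 2 (2 * ω / π))) / (2 * tan κ))
  else if π / 2 ≤ ω ∧ ω ≤ π then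
    √(1 / 2 - tan (κ * (1 + 2 * logb 2 (ω / π))) / (2 * tan κ))
  else 0

namespace vowProfile

variable {κ : ℝ}

lemma apply_pi (hκ₀ : 0 < κ) (hκ₁ : κ < π / 2) : vowProfile κ π = 0 := by
  have htan : tan κ ≠ 0 := (tan_pos_of_pos_of_lt_pi_div_two hκ₀ hκ₁).ne'
  have hπ₂ : ¬ (π / 4 ≤ π ∧ π < π / 2) := fun h ↦ by linarith [h.2, pi_pos]
  rw [vowProfile, if_neg hπ₂, if_pos ⟨by linarith [pi_pos], le_rfl⟩, div_self pi_ne_zero,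
    logb_one, mul_zero, add_zero, mul_one, div_mul_cancel_right₀ htan]
  norm_num

lemma support_subset (hκ₀ : 0 < κ) (hκ₁ : κ < π / 2) :
    Function.support (vowProfile κ) ⊆ Set.Ico (π / 4) π := by
  refine Function.support_subset_iff'.mpr fun ω hω ↦ ?_
  rcases eq_or_ne ω π with rfl | hne
  · exact apply_pi hκ₀ hκ₁
  have hω' : ω < π / 4 ∨ π < ω := by
    rw [Set.mem_Ico, not_and_or, not_le, not_lt] at hω
    exact hω.imp_right (lt_of_le_of_ne' · hne)
  rw [vowProfile, if_neg, if_neg] <;> rintro ⟨h₁, h₂⟩ <;> rcases hω' with h | h <;> linarith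

lemma sq_add_sq_two_mul (hκ₀ : 0 < κ) (hκ₁ : κ < π / 2) {x : ℝ} (hx : x ∈ Set.Ico (π / 4) (π / 2)) :
    vowProfile κ x ^ 2 + vowProfile κ (2 * x) ^ 2 = 1 := by
  obtain ⟨hx₁, hx₂⟩ := hx
  have hπ := pi_pos
  have hθ : |κ * (1 + 2 * logb 2 (2 * x / π))| ≤ κ := by
    rw [abs_mul, abs_of_pos hκ₀]
    refine mul_le_of_le_one_right hκ₀.le (abs_one_add_two_mul_logb_le ?_ ?_)
    · rw [le_div_iff₀ hπ]; linarith
    · rw [div_le_one hπ]; linarith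
  rw [vowProfile, if_pos ⟨hx₁, hx₂⟩, vowProfile, if_neg (by rintro ⟨-, h⟩; linarith),
    if_pos ⟨by linarith, by linarith⟩]
  exact sqrt_half_add_sq_add_sqrt_half_sub_sq (abs_tan_le_tan hθ hκ₁)

end vowProfile

/-- The Vow (variance-optimal wavelet) radial profile satisfies the dyadic
Riesz partition of unity. -/
theorem vow_riesz_partition_of_unity
    (κ : ℝ) (hκ₀ : 0 < κ) (hκ₁ : κ < π / 2)
    (h : ℝ → ℝ)
    (hdef : ∀ ω : ℝ,
      h ω =
        if π / 4 ≤ ω ∧ ω < π / 2 then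
          Real.sqrt (1 / 2 + Real.tan (κ * (1 + 2 * Real.logb 2 (2 * ω / π))) / (2 * Real.tan κ))
        else if π / 2 ≤ ω ∧ ω ≤ π then
          Real.sqrt (1 / 2 - Real.tan (κ * (1 + 2 * Real.logb 2 (ω / π))) / (2 * Real.tan κ))
        else 0) :
    ∀ ω : ℝ, 0 < ω → ∑' i : ℤ, (h ((2 : ℝ) ^ i * ω)) ^ 2 = 1 := by
  obtain rfl : h = vowProfile κ := funext hdef
  intro ω hω
  refine tsum_zpow_mul_eq_of_support_subset (f := fun x ↦ vowProfile κ x ^ 2) (a := π / 4)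
    (by positivity) one_lt_two ?_
    (fun x hx ↦ vowProfile.sq_add_sq_two_mul hκ₀ hκ₁ ?_) hω
  · have hπ : (2 : ℝ) ^ 2 * (π / 4) = π := by ring
    rw [hπ, Function.support_pow _ two_ne_zero]
    exact vowProfile.support_subset hκ₀ hκ₁
  · rwa [show (2 : ℝ) * (π / 4) = π / 2 by ring] at hx
end

section
/- Let q : ℝ → ℝ be an arbitrary function, and let h : ℝ → ℝ be the Held-type radial profile: h(ω) = cos(2π·q(ω/(2π))) for π/4 < ω ≤ π/2, h(ω) = sin(2π·q(ω/(4π))) for π/2 < ω ≤ π, and h(ω) = 0 otherwise. Then h satisfies the dyadic Riesz partition of unity: for every ω > 0, ∑_{i ∈ ℤ} h(2^i ω)² = 1. -/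
open Real

/-- The Held-type radial profile satisfies the dyadic Riesz partition of
unity, for any choice of the function `q`. -/
theorem held_riesz_partition_of_unity
    (q : ℝ → ℝ)
    (h : ℝ → ℝ)
    (hdef : ∀ ω : ℝ,
      h ω =
        if π / 4 < ω ∧ ω ≤ π / 2 then Real.cos (2 * π * q (ω / (2 * π)))
        else if π / 2 < ω ∧ ω ≤ π then Real.sin (2 * π * q (ω / (4 * π)))
        else 0) :
    ∀ ω : ℝ, 0 < ω → ∑' i : ℤ, (h ((2 : ℝ) ^ i * ω)) ^ 2 = 1 := by
  intro ω hω
  have hπ := Real.pi_pos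
  have hx : 0 < π / ω := div_pos hπ hω
  set n : ℤ := ⌊Real.logb 2 (π / ω)⌋ with hn
  have hlogb : (2:ℝ) ^ Real.logb 2 (π / ω) = π / ω :=
    Real.rpow_logb (by norm_num) (by norm_num) hx
  have h1 : (2:ℝ) ^ n ≤ π / ω := by
    have := Real.rpow_le_rpow_of_exponent_le (by norm_num : (1:ℝ) ≤ 2)
      (Int.floor_le (Real.logb 2 (π/ω)))
    rwa [hlogb, Real.rpow_intCast] at this
  have h2 : π / ω < (2:ℝ) ^ (n+1) := by
    have := Real.rpow_lt_rpow_of_exponent_lt (by norm_num : (1:ℝ) < 2)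
      (Int.lt_floor_add_one (Real.logb 2 (π/ω)))
    rw [hlogb] at this
    have e : ((n:ℝ) + 1) = ((n+1 : ℤ) : ℝ) := by push_cast; ring
    rwa [e, Real.rpow_intCast] at this
  have hle : (2:ℝ) ^ n * ω ≤ π := (le_div_iff₀ hω).mp h1
  have hgt : π / 2 < (2:ℝ) ^ n * ω := by
    have := (div_lt_iff₀ hω).mp h2
    rw [zpow_add_one₀ (by norm_num : (2:ℝ) ≠ 0)] at this
    nlinarith
  -- finite support
  have key : ∀ i : ℤ, i ∉ ({n-1, n} : Finset ℤ) → (h ((2:ℝ) ^ i * ω)) ^ 2 = 0 := by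
    intro i hi
    simp only [Finset.mem_insert, Finset.mem_singleton] at hi
    have hz : h ((2:ℝ) ^ i * ω) = 0 := by
      rw [hdef]
      rcases (by omega : i ≤ n - 2 ∨ n + 1 ≤ i) with hc | hc
      · have hp : (2:ℝ) ^ i ≤ (2:ℝ) ^ (n-2) :=
          zpow_le_zpow_right₀ (by norm_num : (1:ℝ) ≤ 2) hc
        have : (2:ℝ) ^ i * ω ≤ (2:ℝ) ^ (n-2) * ω :=
          mul_le_mul_of_nonneg_right hp hω.le
        have h4 : (2:ℝ) ^ (n-2) * ω ≤ π / 4 := by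
          have e : (2:ℝ) ^ (n-2) = (2:ℝ) ^ n / 4 := by
            rw [zpow_sub₀ (by norm_num : (2:ℝ) ≠ 0)]; norm_num
          rw [e]; nlinarith
        rw [if_neg, if_neg] <;> rintro ⟨ha, hb⟩ <;> nlinarith
      · have hp : (2:ℝ) ^ (n+1) ≤ (2:ℝ) ^ i :=
          zpow_le_zpow_right₀ (by norm_num : (1:ℝ) ≤ 2) hc
        have hbig : π < (2:ℝ) ^ i * ω := by
          have := (div_lt_iff₀ hω).mp h2
          nlinarith [mul_le_mul_of_nonneg_right hp hω.le]
        rw [if_neg, if_neg] <;> rintro ⟨ha, hb⟩ <;> nlinarith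
    rw [hz]; ring
  rw [tsum_eq_sum key, Finset.sum_pair (by omega : n - 1 ≠ n)]
  have hhalf : (2:ℝ) ^ (n-1) * ω = (2:ℝ) ^ n * ω / 2 := by
    rw [zpow_sub₀ (by norm_num : (2:ℝ) ≠ 0)]; ring
  have hvn : h ((2:ℝ) ^ n * ω) = Real.sin (2 * π * q ((2:ℝ) ^ n * ω / (4 * π))) := by
    rw [hdef, if_neg (by rintro ⟨ha, hb⟩; nlinarith), if_pos ⟨hgt, hle⟩]
  have hvn1 : h ((2:ℝ) ^ (n-1) * ω)
      = Real.cos (2 * π * q ((2:ℝ) ^ n * ω / (4 * π))) := by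
    rw [hdef, if_pos]
    · congr 2
      rw [hhalf]; ring
    · constructor
      · rw [hhalf]; nlinarith
      · rw [hhalf]; nlinarith
  rw [hvn, hvn1, Real.cos_sq_add_sin_sq]
end

section
/- Heisenberg–Gabor limit: let f : ℝ → ℂ be a Schwartz function with ‖f‖_{L²} = 1 (so |f|² is a probability density), and let f̂ denote its Fourier transform f̂(ξ) = ∫ f(t)·e^{−2πi t ξ} dt. Then the product of the time spread and the frequency spread about the origin satisfies (∫_ℝ t²·|f(t)|² dt) · (∫_ℝ ξ²·|f̂(ξ)|² dξ) ≥ 1/(16π²). Consequently, with Δt = (∫ t²|f|²)^{1/2} and Δf = (∫ ξ²|f̂|²)^{1/2}, one has Δt·Δf ≥ 1/(4π). -/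
/-!
Integrating by parts, `∫ ‖f‖² = -∫ t · (‖f‖²)' = -2 ∫ t ⟪f t, f' t⟫`, so Cauchy–Schwarz gives
`∫ ‖f‖² ≤ 2 ‖t f‖₂ ‖f'‖₂`. By Plancherel and `𝓕 f' ξ = 2πiξ · 𝓕 f ξ`, `‖f'‖₂ = 2π ‖ξ 𝓕 f‖₂`.
-/

open Real MeasureTheory
open scoped FourierTransform ENNReal

theorem integral_norm_mul_norm_le_sqrt_mul_sqrt {α E : Type*} [MeasurableSpace α]
    {μ : Measure α} [NormedAddCommGroup E] {f g : α → E} (hf : MemLp f 2 μ) (hg : MemLp g 2 μ) :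
    ∫ a, ‖f a‖ * ‖g a‖ ∂μ ≤ √(∫ a, ‖f a‖ ^ 2 ∂μ) * √(∫ a, ‖g a‖ ^ 2 ∂μ) := by
  simpa [Real.sqrt_eq_rpow] using integral_mul_norm_le_Lp_mul_Lq (μ := μ)
    Real.HolderConjugate.two_two (by simpa using hf) (by simpa using hg)

namespace SchwartzMap

section
variable {F : Type*} [NormedAddCommGroup F] [NormedSpace ℝ F]

theorem memLp_id_smul (f : 𝓢(ℝ, F)) (p : ℝ≥0∞) : MemLp (fun t : ℝ => t • f t) p := by
  have : (fun t : ℝ => t).HasTemperateGrowth := by fun_prop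
  simpa [smulLeftCLM_apply this] using (smulLeftCLM F (fun t : ℝ => t) f).memLp p

theorem memLp_deriv (f : 𝓢(ℝ, F)) (p : ℝ≥0∞) : MemLp (deriv f) p := by
  rw [← funext (derivCLM_apply ℝ f)]
  exact (derivCLM ℝ F f).memLp p

end

section
variable {H : Type*} [NormedAddCommGroup H] [InnerProductSpace ℝ H]

theorem integral_mul_inner_deriv (f : 𝓢(ℝ, H)) :
    ∫ t, t * (2 * inner ℝ (f t) (deriv f t)) = -∫ t, ‖f t‖ ^ 2 := by
  have htf := (f.memLp_id_smul 2).norm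
  have hu'v : Integrable (fun t => 1 * ‖f t‖ ^ 2) := by
    simpa using (f.memLp 2).integrable_norm_pow two_ne_zero
  have huv : Integrable (fun t => t * ‖f t‖ ^ 2) := by
    refine (htf.integrable_mul (f.memLp 2).norm).mono'
      (by fun_prop) (.of_forall fun t => le_of_eq ?_)
    simp only [norm_mul, norm_pow, norm_smul, Real.norm_eq_abs, abs_norm, Pi.mul_apply]
    ring
  have huv' : Integrable (fun t => t * (2 * inner ℝ (f t) (deriv f t))) := by
    refine ((htf.integrable_mul (f.memLp_deriv 2).norm).const_mul 2).mono'
      (aestronglyMeasurable_id.mul (((f.memLp 2).1.inner (f.memLp_deriv 2).1).const_mul (2 : ℝ)))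
      (.of_forall fun t => ?_)
    have := abs_real_inner_le_norm (f t) (deriv f t)
    simp only [norm_mul, norm_smul, Real.norm_eq_abs, abs_two, Pi.mul_apply]
    nlinarith [abs_nonneg t]
  simpa using integral_mul_deriv_eq_deriv_mul_of_integrable (u := fun t : ℝ => t)
    (v := fun t => ‖f t‖ ^ 2) (u' := fun _ => 1)
    (fun x _ => hasDerivAt_id x) (fun x _ => (f.differentiableAt.hasDerivAt).norm_sq)
    huv' hu'v huv

theorem integral_norm_sq_le_two_mul_sqrt_mul_sqrt (f : 𝓢(ℝ, H)) :
    ∫ t, ‖f t‖ ^ 2 ≤ 2 * √(∫ t, t ^ 2 * ‖f t‖ ^ 2) * √(∫ t, ‖deriv f t‖ ^ 2) := by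
  have hnorm_smul : ∀ t : ℝ, ‖t • f t‖ ^ 2 = t ^ 2 * ‖f t‖ ^ 2 := fun t => by
    rw [norm_smul, mul_pow, Real.norm_eq_abs, sq_abs]
  calc ∫ t, ‖f t‖ ^ 2
      = -∫ t, t * (2 * inner ℝ (f t) (deriv f t)) := by rw [integral_mul_inner_deriv, neg_neg]
    _ ≤ ∫ t, 2 * (‖t • f t‖ * ‖deriv f t‖) := by
        refine (neg_le_abs _).trans ((abs_integral_le_integral_abs).trans
          (integral_mono_of_nonneg (.of_forall fun t => abs_nonneg _) ?_ (.of_forall fun t => ?_)))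
        · exact (((f.memLp_id_smul 2).norm.integrable_mul (f.memLp_deriv 2).norm).const_mul 2)
        · have := abs_real_inner_le_norm (f t) (deriv f t)
          simp only [abs_mul, norm_smul, Real.norm_eq_abs, abs_two]
          nlinarith [abs_nonneg t]
    _ ≤ 2 * (√(∫ t, ‖t • f t‖ ^ 2) * √(∫ t, ‖deriv f t‖ ^ 2)) := by
        rw [integral_const_mul]
        gcongr
        exact integral_norm_mul_norm_le_sqrt_mul_sqrt (f.memLp_id_smul 2) (f.memLp_deriv 2)
    _ = 2 * √(∫ t, t ^ 2 * ‖f t‖ ^ 2) * √(∫ t, ‖deriv f t‖ ^ 2) := by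
        simp only [hnorm_smul, mul_assoc]

end

section
variable {H : Type*} [NormedAddCommGroup H] [InnerProductSpace ℂ H] [CompleteSpace H]

theorem integral_norm_sq_deriv_eq (f : 𝓢(ℝ, H)) :
    ∫ t, ‖deriv f t‖ ^ 2 = 4 * π ^ 2 * ∫ ξ, ξ ^ 2 * ‖𝓕 (⇑f) ξ‖ ^ 2 := by
  have h := integral_norm_sq_fourier (derivCLM ℝ H f)
  have hcoe : ⇑(derivCLM ℝ H f) = deriv f := funext (derivCLM_apply ℝ f)
  rw [fourier_coe, hcoe, Real.fourier_deriv f.integrable f.differentiable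
    (memLp_one_iff_integrable.1 (memLp_deriv f 1))] at h
  rw [← h, ← integral_const_mul]
  congr 1 with ξ
  have : ‖2 * π * Complex.I * ξ‖ = 2 * π * |ξ| := by
    simp [abs_of_pos pi_pos]
  rw [norm_smul, this, mul_pow, mul_pow, sq_abs]
  ring

end

end SchwartzMap

/-- Heisenberg–Gabor limit: for a unit-energy Schwartz signal `f`, the product
of the time spread and the frequency spread about the origin is at least
`1/(16π²)`; consequently `Δt · Δf ≥ 1/(4π)`. -/
theorem heisenberg_gabor_limit
    (f : SchwartzMap ℝ ℂ) (hf : ∫ t : ℝ, ‖f t‖ ^ 2 = 1) :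
    1 / (16 * π ^ 2) ≤
      (∫ t : ℝ, t ^ 2 * ‖f t‖ ^ 2) * (∫ ξ : ℝ, ξ ^ 2 * ‖𝓕 (⇑f) ξ‖ ^ 2) ∧
    1 / (4 * π) ≤
      Real.sqrt (∫ t : ℝ, t ^ 2 * ‖f t‖ ^ 2) *
        Real.sqrt (∫ ξ : ℝ, ξ ^ 2 * ‖𝓕 (⇑f) ξ‖ ^ 2) := by
  set A := ∫ t : ℝ, t ^ 2 * ‖f t‖ ^ 2
  set B := ∫ ξ : ℝ, ξ ^ 2 * ‖𝓕 (⇑f) ξ‖ ^ 2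
  have hA : 0 ≤ A := integral_nonneg fun t => by positivity
  have hB : 0 ≤ B := integral_nonneg fun ξ => by positivity
  have hsqrt : 1 / (4 * π) ≤ √A * √B := by
    have h := f.integral_norm_sq_le_two_mul_sqrt_mul_sqrt
    rw [hf, f.integral_norm_sq_deriv_eq, show 4 * π ^ 2 = (2 * π) ^ 2 by ring,
      sqrt_mul (by positivity), sqrt_sq (by positivity)] at h
    rw [div_le_iff₀ (by positivity)]
    linarith
  refine ⟨?_, hsqrt⟩
  calc 1 / (16 * π ^ 2) = (1 / (4 * π)) ^ 2 := by ring
    _ ≤ (√A * √B) ^ 2 := pow_le_pow_left₀ (by positivity) hsqrt 2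
    _ = A * B := by rw [mul_pow, sq_sqrt hA, sq_sqrt hB]
end
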